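/- Let γ ∈ ℝ satisfy γ² + γ − 1 = 0. Then the point [1:0:−γ] of ℙ²(ℂ) lies on each of the four lines L₃, L₅, M₄, N_γ and on no other line of ℋ_γ, and the point [0:1:−(γ+1)] lies on each of the three lines L₂, M₂, N_γ and on no other line of ℋ_γ. In particular N_γ is the line joining the triple point L₃ ∩ L₅ ∩ M₄ to the double point L₂ ∩ M₂ of 𝒞_γ. -/

import Mathlib

open scoped LinearAlgebra.Projectivization

/-- The complex projective plane `ℙ²(ℂ)`, the projectivization of `ℂ³`. -/
abbrev Pt := ℙ ℂ (Fin 3 → ℂ)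

/-- The projective line `{[x:y:z] | a·x + b·y + c·z = 0}` in `ℙ²(ℂ)` determined by the
linear form with coefficients `(a, b, c)`.  (Vanishing of a linear form is independent
of the choice of homogeneous coordinates, so testing it on `p.rep` is equivalent to
testing it on any representative.) -/
def pline (a b c : ℂ) : Set Pt :=
  {p | a * p.rep 0 + b * p.rep 1 + c * p.rep 2 = 0}

/-- The lines `M₁,…,M₅` of the arrangement `𝒞_γ` (0-based: `Mline γ i = M_{i+1}`):
`M₁: z=0`, `M₂: x=0`, `M₃: x=z`, `M₄: x=−(γ+1)z`, `M₅: x=(γ+2)z`. -/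
noncomputable def Mline (γ : ℝ) : Fin 5 → Set Pt :=
  ![pline 0 0 1, pline 1 0 0, pline 1 0 (-1),
    pline 1 0 ((γ : ℂ) + 1), pline 1 0 (-((γ : ℂ) + 2))]

/-- The lines `L₁,…,L₅` of the arrangement `𝒞_γ` (0-based: `Lline γ i = L_{i+1}`):
`L₁: y=x`, `L₂: y=γ(x−z)`, `L₃: y=γx+z`, `L₄: y=z`, `L₅: y=0`. -/
noncomputable def Lline (γ : ℝ) : Fin 5 → Set Pt :=
  ![pline 1 (-1) 0, pline (γ : ℂ) (-1) (-(γ : ℂ)), pline (γ : ℂ) (-1) 1,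
    pline 0 1 (-1), pline 0 1 0]

/-- The extra line `N_γ : γx + (γ+1)y + z = 0` of the arrangement `ℋ_γ = 𝒞_γ ∪ {N_γ}`. -/
noncomputable def Nline (γ : ℝ) : Set Pt := pline (γ : ℂ) ((γ : ℂ) + 1) 1

/-!
Every incidence is the vanishing of a linear form at an explicit coordinate vector, i.e. a
polynomial identity in `γ`. Those that hold are identities or reduce to `γ (γ + 1) = 1`; the others
evaluate, modulo `γ² + γ - 1`, to a nonzero constant times `γ`, `γ + 1` or `γ + 2` (or a
product of these), and none of these vanishes because `0`, `-1`, `-2` are not roots of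
`X² + X - 1`.
-/

lemma mem_pline_mk {a b c : ℂ} {v : Fin 3 → ℂ} (hv : v ≠ 0) :
    Projectivization.mk ℂ v hv ∈ pline a b c ↔ a * v 0 + b * v 1 + c * v 2 = 0 := by
  obtain ⟨u, hu⟩ := (Projectivization.mk_eq_mk_iff ℂ _ _ _ hv).mp
    (Projectivization.mk_rep (Projectivization.mk ℂ v hv))
  have hscale : a * (u * v 0) + b * (u * v 1) + c * (u * v 2)
      = u * (a * v 0 + b * v 1 + c * v 2) := by ring
  simp only [pline, Set.mem_ofPred_eq, ← hu, Pi.smul_apply, Units.smul_def, smul_eq_mul, hscale,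
    mul_eq_zero, u.ne_zero, false_or]

lemma ne_zero_of_sq_add_self_sub_one_eq_zero {R : Type*} [CommRing R] [Nontrivial R] {x : R}
    (hx : x ^ 2 + x - 1 = 0) : x ≠ 0 ∧ x + 1 ≠ 0 ∧ x + 2 ≠ 0 := by
  refine ⟨fun h => ?_, fun h => ?_, fun h => ?_⟩ <;> apply one_ne_zero (α := R)
  · linear_combination (x + 1) * h - hx
  · linear_combination x * h - hx
  · linear_combination (1 - x) * h + hx

/-- For `γ` a root of `γ² + γ − 1 = 0`: the point `[1:0:−γ]` lies exactly on the lines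
`L₃`, `L₅`, `M₄` and `N_γ` of `ℋ_γ`, and the point `[0:1:−(γ+1)]` lies exactly on the
lines `L₂`, `M₂` and `N_γ` of `ℋ_γ`.  In particular `N_γ` is the line joining the triple
point `L₃ ∩ L₅ ∩ M₄` to the double point `L₂ ∩ M₂` of `𝒞_γ`.
(0-based indices: `Lline γ 2 = L₃`, `Lline γ 4 = L₅`, `Mline γ 3 = M₄`, etc.) -/
theorem stmt_13 (γ : ℝ) (hγ : γ ^ 2 + γ - 1 = 0) :
    let p : Pt := Projectivization.mk ℂ (![1, 0, -(γ : ℂ)] : Fin 3 → ℂ)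
      (by intro h; have h0 := congrFun h 0; simp at h0)
    let q : Pt := Projectivization.mk ℂ (![0, 1, -((γ : ℂ) + 1)] : Fin 3 → ℂ)
      (by intro h; have h1 := congrFun h 1; simp at h1)
    (∀ i : Fin 5, p ∈ Lline γ i ↔ i = 2 ∨ i = 4) ∧
    (∀ i : Fin 5, p ∈ Mline γ i ↔ i = 3) ∧
    p ∈ Nline γ ∧
    (∀ i : Fin 5, q ∈ Lline γ i ↔ i = 1) ∧
    (∀ i : Fin 5, q ∈ Mline γ i ↔ i = 1) ∧
    q ∈ Nline γ := by
  intro p q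
  have hc : (γ : ℂ) ^ 2 + γ - 1 = 0 := by exact_mod_cast congrArg Complex.ofReal hγ
  obtain ⟨hγ0, hγ1, hγ2⟩ := ne_zero_of_sq_add_self_sub_one_eq_zero hc
  refine ⟨fun i => ?_, fun i => ?_, ?_, fun i => ?_, fun i => ?_, ?_⟩ <;> try fin_cases i
  all_goals
    simp only [p, q, Lline, Mline, Nline, mem_pline_mk, Matrix.cons_val, Fin.reduceFinMk]
    grind
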